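/- arXiv:2112.14163 — 9 statements merged into one kernel-verified Lean document; each statement's English description precedes it below -/
import Mathlib

section
/- Let α ∈ (0,1], let p(α) = ⌈2/α⌉, and let (v', v_d) ∈ ℝ^{d-1} × ℝ satisfy |v'| < r and h(|v'|/r)^α < v_d < h (i.e., (v',v_d) lies in the truncated open α-cusp Γ of radius r and height h). Then for every t with 0 < |t| ≤ 1, the point (t^{p(α)} v', t² v_d) also lies in Γ. -/
/-- If `(v', v_d)` lies in the truncated open `α`-cusp
`Γ = {(x', x_d) : ‖x'‖ < r, h(‖x'‖/r)^α < x_d < h}` and `0 < |t| ≤ 1`, then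
`(t^{p(α)} v', t² v_d)` also lies in `Γ`, where `p(α) = ⌈2/α⌉`. -/
theorem stmt0 (e : ℕ) (α r h : ℝ) (hα0 : 0 < α) (hα1 : α ≤ 1) (hr : 0 < r) (hh : 0 < h)
    (v' : EuclideanSpace ℝ (Fin e)) (vd : ℝ)
    (hv1 : ‖v'‖ < r) (hv2 : h * (‖v'‖ / r) ^ α < vd) (hv3 : vd < h)
    (t : ℝ) (ht0 : 0 < |t|) (ht1 : |t| ≤ 1) :
    ‖t ^ ⌈2 / α⌉₊ • v'‖ < r ∧
      h * (‖t ^ ⌈2 / α⌉₊ • v'‖ / r) ^ α < t ^ 2 * vd ∧ t ^ 2 * vd < h := by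
  set p := ⌈2 / α⌉₊ with hp
  have hx : (0:ℝ) ≤ ‖v'‖ := norm_nonneg _
  have htp1 : |t| ^ p ≤ 1 := pow_le_one₀ (abs_nonneg t) ht1
  have htp0 : 0 < |t| ^ p := pow_pos ht0 p
  have hn : ‖t ^ p • v'‖ = |t| ^ p * ‖v'‖ := by
    rw [norm_smul, norm_pow, Real.norm_eq_abs]
  have hvd0 : 0 < vd := lt_of_le_of_lt
    (mul_nonneg hh.le (Real.rpow_nonneg (div_nonneg hx hr.le) α)) hv2
  have ht2 : t ^ 2 ≤ 1 := by
    calc t ^ 2 = |t| ^ 2 := (sq_abs t).symm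
    _ ≤ 1 := pow_le_one₀ (abs_nonneg t) ht1
  have h2pα : (2:ℝ) ≤ (p : ℝ) * α := by
    have := Nat.le_ceil (2 / α)
    calc (2:ℝ) = 2 / α * α := by field_simp
    _ ≤ (p : ℝ) * α := by gcongr
  have hexp : |t| ^ ((p : ℝ) * α) ≤ t ^ 2 := by
    have : |t| ^ ((p : ℝ) * α) ≤ |t| ^ (2:ℝ) :=
      Real.rpow_le_rpow_of_exponent_ge ht0 ht1 h2pα
    calc |t| ^ ((p : ℝ) * α) ≤ |t| ^ (2:ℝ) := this
    _ = |t| ^ (2:ℕ) := by rw [show ((2:ℝ)) = ((2:ℕ):ℝ) by norm_num, Real.rpow_natCast]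
    _ = t ^ 2 := sq_abs t
  refine ⟨?_, ?_, ?_⟩
  · rw [hn]
    calc |t| ^ p * ‖v'‖ ≤ 1 * ‖v'‖ := by gcongr
    _ = ‖v'‖ := one_mul _
    _ < r := hv1
  · rw [hn]
    have key : (|t| ^ p * ‖v'‖ / r) ^ α = |t| ^ ((p : ℝ) * α) * (‖v'‖ / r) ^ α := by
      rw [mul_div_assoc, Real.mul_rpow (pow_nonneg (abs_nonneg t) p) (div_nonneg hx hr.le),
        ← Real.rpow_natCast |t| p, ← Real.rpow_mul (abs_nonneg t)]
    rw [key]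
    have htpα0 : 0 < |t| ^ ((p : ℝ) * α) := Real.rpow_pos_of_pos ht0 _
    calc h * (|t| ^ ((p : ℝ) * α) * (‖v'‖ / r) ^ α)
        = |t| ^ ((p : ℝ) * α) * (h * (‖v'‖ / r) ^ α) := by ring
      _ < |t| ^ ((p : ℝ) * α) * vd := by gcongr
      _ ≤ t ^ 2 * vd := by gcongr
  · calc t ^ 2 * vd ≤ 1 * vd := by gcongr
    _ = vd := one_mul _
    _ < h := hv3
end

section
/- Let α ∈ (0,1] and let a,b be positive integers such that for every point (v',v_d) in the truncated open α-cusp Γ = Γ_d^α(r,h) and every t with 0 < |t| ≤ 1, the point (t^a v', t^b v_d) lies in Γ. Then b is a positive even integer and a·α ≥ b; in particular a ≥ ⌈2/α⌉ = p(α). -/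
/-!
Every point of the cusp has positive last coordinate, so the dilation with `t = -1` can only
preserve the cusp when `(-1)^b = 1`. For `0 < t < 1`, let the last coordinate of a point with
`‖v'‖ = ρ > 0` tend to the lower boundary `h (ρ/r)^α`: the image must lie above the boundary at
`t^a ρ`, which forces `t^(aα) ≤ t^b`, i.e. `b ≤ aα`.
-/

open Set

section Cusp

variable {E : Type*} [NormedAddCommGroup E]

def truncatedCusp (α r h : ℝ) : Set (E × ℝ) :=
  {v | ‖v.1‖ < r ∧ h * (‖v.1‖ / r) ^ α < v.2 ∧ v.2 < h}

variable {α r h : ℝ}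

lemma snd_pos_of_mem_truncatedCusp (hh : 0 ≤ h) {v : E × ℝ} (hv : v ∈ truncatedCusp α r h) :
    0 < v.2 := by
  have hr : 0 < r := (norm_nonneg _).trans_lt hv.1
  exact lt_of_le_of_lt (mul_nonneg hh (by positivity)) hv.2.1

lemma zero_half_mem_truncatedCusp (hα : 0 < α) (hr : 0 < r) (hh : 0 < h) :
    ((0 : E), h / 2) ∈ truncatedCusp α r h := by
  refine ⟨by simpa using hr, ?_, by linarith⟩
  simp [Real.zero_rpow hα.ne']
  linarith

variable [NormedSpace ℝ E]

def cuspDilation (a b : ℕ) (t : ℝ) (v : E × ℝ) : E × ℝ :=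
  (t ^ a • v.1, t ^ b * v.2)

lemma even_of_mapsTo_cuspDilation_neg_one (hα : 0 < α) (hr : 0 < r) (hh : 0 < h) {a b : ℕ}
    (H : MapsTo (cuspDilation a b (-1)) (truncatedCusp α r h) (truncatedCusp (E := E) α r h)) :
    Even b := by
  by_contra hb
  have hpos := snd_pos_of_mem_truncatedCusp hh.le (H (zero_half_mem_truncatedCusp hα hr hh))
  simp only [cuspDilation, (Nat.not_even_iff_odd.mp hb).neg_one_pow] at hpos
  linarith

lemma lower_boundary_le_of_mapsTo_cuspDilation (hα : 0 < α) (hh : 0 < h) {a b : ℕ} {t : ℝ}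
    (H : MapsTo (cuspDilation a b t) (truncatedCusp α r h) (truncatedCusp (E := E) α r h))
    {v' : E} (hv' : ‖v'‖ < r) :
    h * (‖t ^ a • v'‖ / r) ^ α ≤ t ^ b * (h * (‖v'‖ / r) ^ α) := by
  have hr : 0 < r := (norm_nonneg v').trans_lt hv'
  have hlow : h * (‖v'‖ / r) ^ α < h := by
    have : (‖v'‖ / r) ^ α < 1 :=
      Real.rpow_lt_one (by positivity) ((div_lt_one hr).mpr hv') hα
    nlinarith
  have hclosure : h * (‖v'‖ / r) ^ α ∈ closure (Ioo (h * (‖v'‖ / r) ^ α) h) := by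
    rw [closure_Ioo hlow.ne]
    exact left_mem_Icc.mpr hlow.le
  refine ContinuousWithinAt.closure_le hclosure continuousWithinAt_const
    (continuous_const.mul continuous_id).continuousWithinAt fun vd hvd => ?_
  exact (H (x := (v', vd)) ⟨hv', hvd.1, hvd.2⟩).2.1.le

lemma le_mul_of_mapsTo_cuspDilation [Nontrivial E] (hα : 0 < α) (hr : 0 < r) (hh : 0 < h)
    {a b : ℕ} {t : ℝ} (ht0 : 0 < t) (ht1 : t < 1)
    (H : MapsTo (cuspDilation a b t) (truncatedCusp α r h) (truncatedCusp (E := E) α r h)) :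
    (b : ℝ) ≤ a * α := by
  obtain ⟨v', hv'⟩ := exists_norm_eq E (half_pos hr).le
  set s := ‖v'‖ / r
  have hs : 0 < s := div_pos (by rw [hv']; positivity) hr
  have hbound := lower_boundary_le_of_mapsTo_cuspDilation hα hh H (by rw [hv']; linarith)
  have hscaled : (‖t ^ a • v'‖ / r) ^ α = t ^ ((a : ℝ) * α) * s ^ α := by
    rw [norm_smul, norm_pow, Real.norm_of_nonneg ht0.le, mul_div_assoc,
      Real.mul_rpow (by positivity) hs.le, ← Real.rpow_natCast, ← Real.rpow_mul ht0.le]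
  rw [hscaled, ← Real.rpow_natCast t b] at hbound
  have hpow : t ^ ((a : ℝ) * α) ≤ t ^ (b : ℝ) :=
    le_of_mul_le_mul_right (by linarith) (mul_pos hh (Real.rpow_pos_of_pos hs α))
  exact (Real.rpow_le_rpow_left_iff_of_base_lt_one ht0 ht1).mp hpow

end Cusp

theorem stmt1_general (e : ℕ) (he : 1 ≤ e) (α r h : ℝ) (hα0 : 0 < α)
    (hr : 0 < r) (hh : 0 < h) (a b : ℕ) (hb : 0 < b)
    (H : ∀ (v' : EuclideanSpace ℝ (Fin e)) (vd : ℝ),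
      ‖v'‖ < r → h * (‖v'‖ / r) ^ α < vd → vd < h →
      ∀ t : ℝ, 0 < |t| → |t| ≤ 1 →
        ‖t ^ a • v'‖ < r ∧ h * (‖t ^ a • v'‖ / r) ^ α < t ^ b * vd ∧ t ^ b * vd < h) :
    Even b ∧ (b : ℝ) ≤ (a : ℝ) * α ∧ ⌈2 / α⌉₊ ≤ a := by
  have : Nonempty (Fin e) := ⟨⟨0, he⟩⟩
  have hmaps : ∀ t : ℝ, 0 < |t| → |t| ≤ 1 →
      MapsTo (cuspDilation a b t) (truncatedCusp α r h) (truncatedCusp α r h) :=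
    fun t ht0 ht1 v hv => H v.1 v.2 hv.1 hv.2.1 hv.2.2 t ht0 ht1
  have heven : Even b :=
    even_of_mapsTo_cuspDilation_neg_one hα0 hr hh (hmaps (-1) (by simp) (by simp))
  have hle : (b : ℝ) ≤ a * α :=
    le_mul_of_mapsTo_cuspDilation hα0 hr hh (by norm_num) (by norm_num)
      (hmaps (1 / 2) (by norm_num) (by norm_num [abs_of_pos]))
  have htwo : (2 : ℝ) ≤ b := by
    obtain ⟨k, rfl⟩ := heven
    exact_mod_cast (by omega : 2 ≤ k + k)
  refine ⟨heven, hle, ?_⟩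
  rw [Nat.ceil_le, div_le_iff₀ hα0]
  linarith

/-- If `a, b` are positive integers such that `(t^a v', t^b v_d)` stays in the
truncated open `α`-cusp `Γ = Γ_d^α(r,h)` for every `(v',v_d) ∈ Γ` and every `0 < |t| ≤ 1`,
then `b` is even and `a·α ≥ b`; in particular `a ≥ ⌈2/α⌉ = p(α)`. -/
theorem stmt1 (e : ℕ) (he : 1 ≤ e) (α r h : ℝ) (hα0 : 0 < α) (hα1 : α ≤ 1)
    (hr : 0 < r) (hh : 0 < h) (a b : ℕ) (ha : 0 < a) (hb : 0 < b)
    (H : ∀ (v' : EuclideanSpace ℝ (Fin e)) (vd : ℝ),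
      ‖v'‖ < r → h * (‖v'‖ / r) ^ α < vd → vd < h →
      ∀ t : ℝ, 0 < |t| → |t| ≤ 1 →
        ‖t ^ a • v'‖ < r ∧ h * (‖t ^ a • v'‖ / r) ^ α < t ^ b * vd ∧ t ^ b * vd < h) :
    Even b ∧ (b : ℝ) ≤ (a : ℝ) * α ∧ ⌈2 / α⌉₊ ≤ a :=
  stmt1_general e he α r h hα0 hr hh a b hb H
end

section
/- Let a,b be positive integers with b ≤ a, let x ∈ ℝ^d, v = (v', v_d) ∈ ℝ^{d-1} × ℝ, and define the curve c(t) = x + (t^a v', t^b v_d). Let f be C^a in a neighborhood of the image of c near t = 0. Then for 0 ≤ k < a: if k = jb for some integer j ≥ 1, then (1/k!)(f∘c)^{(k)}(0) = (1/j!) f^{(j)}(x)((0,v_d)^j), and (f∘c)^{(k)}(0) = 0 if k is not a multiple of b and k ≠ 0. Moreover, (1/a!)(f∘c)^{(a)}(0) = f'(x)(v',0) if a is not a multiple of b, and (1/a!)(f∘c)^{(a)}(0) = f'(x)(v',0) + (1/j!) f^{(j)}(x)((0,v_d)^j) if a = jb. -/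
/-!
Put `w = (0, v_d)`, `v = (v', 0)` and `φ u = f (x + u • w)`, so that the composite is
`g t = f (x + t ^ b • w + t ^ a • v)`. Strict differentiability of `f` at `x` gives
`g t = φ (t ^ b) + t ^ a f'(x) v + o(t ^ a)`, and Taylor's theorem for `φ` (whose coefficients are
`f^{(j)}(x)(w^j) / j!`) replaces `φ (t ^ b)` by a polynomial in `t ^ b` up to `o(t ^ a)`. Comparing
with the Taylor expansion of `g` itself, uniqueness of polynomial expansions at `0` identifies
`g^{(k)}(0) / k!` with the coefficient of `t ^ k` in that polynomial.
-/

open Filter Topology Asymptotics Polynomial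
open scoped Nat

namespace Polynomial

variable {𝕜 : Type*} [NontriviallyNormedField 𝕜]

theorem coeff_zero_eq_zero_of_isLittleO_pow {n : ℕ} {P : 𝕜[X]}
    (h : (fun t => P.eval t) =o[𝓝[≠] 0] fun t => t ^ n) : P.coeff 0 = 0 := by
  have hbdd : (fun t : 𝕜 => t ^ n) =O[𝓝[≠] 0] fun _ => (1 : 𝕜) :=
    ((continuous_pow n).tendsto 0).mono_left nhdsWithin_le_nhds |>.isBigO_one 𝕜
  refine tendsto_nhds_unique ?_ (isLittleO_one_iff 𝕜 |>.1 (h.trans_isBigO hbdd))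
  rw [coeff_zero_eq_eval_zero]
  exact (P.continuous.tendsto 0).mono_left nhdsWithin_le_nhds

theorem coeff_eq_zero_of_isLittleO_pow {n : ℕ} {P : 𝕜[X]}
    (h : (fun t => P.eval t) =o[𝓝[≠] 0] fun t => t ^ n) : ∀ k ≤ n, P.coeff k = 0 := by
  induction n generalizing P with
  | zero =>
    intro k hk
    rw [Nat.le_zero.1 hk]
    exact coeff_zero_eq_zero_of_isLittleO_pow h
  | succ n ih =>
    have hP0 := coeff_zero_eq_zero_of_isLittleO_pow h
    rintro (_ | k) hk
    · exact hP0
    have hX : ∀ t, P.eval t = t * (divX P).eval t := fun t => by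
      conv_lhs => rw [← X_mul_divX_add P, hP0]
      simp
    have hdivX : (fun t => (divX P).eval t) =o[𝓝[≠] 0] fun t => t ^ n := by
      refine ((isBigO_refl (fun t : 𝕜 => t⁻¹) _).mul_isLittleO h).congr' ?_ ?_ <;>
        filter_upwards [self_mem_nhdsWithin] with t (ht : t ≠ 0)
      · simp [hX, inv_mul_cancel_left₀ ht]
      · simp [pow_succ', inv_mul_cancel_left₀ ht]
    rw [← coeff_divX]
    exact ih hdivX k (by omega)

end Polynomial

theorem isBigO_pow_pow_of_le {𝕜 : Type*} [NormedField 𝕜] {m n : ℕ} (h : m ≤ n) :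
    (fun x : 𝕜 => x ^ n) =O[𝓝 0] fun x => x ^ m :=
  h.eq_or_lt.elim (fun h => h ▸ isBigO_refl _ _) fun h => (isLittleO_pow_pow h).isBigO

/-- Mathlib's `taylorWithin` takes values in `PolynomialModule`; here a genuine polynomial is
needed, so that it can be substituted into `expand`. -/
noncomputable def taylorPolynomial (g : ℝ → ℝ) (n : ℕ) : ℝ[X] :=
  ∑ k ∈ Finset.range (n + 1), C (iteratedDeriv k g 0 / k !) * X ^ k

theorem taylorPolynomial_coeff (g : ℝ → ℝ) {n k : ℕ} (hk : k ≤ n) :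
    (taylorPolynomial g n).coeff k = iteratedDeriv k g 0 / k ! := by
  simp [taylorPolynomial, Nat.lt_succ_of_le hk]

theorem isLittleO_sub_taylorPolynomial {g : ℝ → ℝ} {n : ℕ} (hg : ContDiffAt ℝ n g 0) :
    (fun t => g t - (taylorPolynomial g n).eval t) =o[𝓝 0] fun t => t ^ n := by
  obtain ⟨u, hu, hgu⟩ := hg.contDiffOn le_rfl (by simp)
  obtain ⟨r, hr, hru⟩ := Metric.mem_nhds_iff.1 hu
  have h0 := Metric.mem_ball_self hr (x := (0 : ℝ))
  have htaylor := taylor_isLittleO (convex_ball 0 r) h0 (hgu.mono hru)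
  rw [Metric.isOpen_ball.nhdsWithin_eq h0] at htaylor
  refine htaylor.congr (fun t => ?_) fun t => by simp
  simp only [taylorPolynomial, taylor_within_apply, eval_finsetSum, eval_mul, eval_C, eval_pow,
    eval_X, iteratedDerivWithin_of_isOpen Metric.isOpen_ball h0, sub_zero, smul_eq_mul]
  exact congrArg _ (Finset.sum_congr rfl fun k _ => by ring)

section

variable {E F : Type*} [NormedAddCommGroup E] [NormedSpace ℝ E] [NormedAddCommGroup F]
  [NormedSpace ℝ F]

theorem iteratedDeriv_comp_add_smul {f : E → F} {x : E} {n : WithTop ℕ∞}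
    (hf : ContDiffAt ℝ n f x) {j : ℕ} (hj : j ≤ n) (w : E) :
    iteratedDeriv j (fun u : ℝ => f (x + u • w)) 0 = iteratedFDeriv ℝ j f x (fun _ => w) := by
  obtain ⟨u, hu, hfu⟩ := hf.contDiffOn hj (by simp)
  obtain ⟨V, hVu, hV, hxV⟩ := mem_nhds_iff.1 hu
  set S : Set E := (x + ·) ⁻¹' V
  have hS : IsOpen S := hV.preimage (continuous_const_add x)
  have h0S : (0 : E) ∈ S := by simpa [S] using hxV
  have hfS : ContDiffOn ℝ j (fun z => f (x + z)) S :=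
    (hfu.mono hVu).comp (contDiff_const.add contDiff_id).contDiffOn fun z hz => hz
  set T := ContinuousLinearMap.toSpanSingleton ℝ w
  have hT : IsOpen (T ⁻¹' S) := hS.preimage T.continuous
  have h0T : (0 : ℝ) ∈ T ⁻¹' S := by simpa using h0S
  have hcomp := T.iteratedFDerivWithin_comp_right hfS hS.uniqueDiffOn hT.uniqueDiffOn h0T le_rfl
  rw [iteratedFDerivWithin_of_isOpen j hT h0T,
    iteratedFDerivWithin_of_isOpen j hS (by simpa using h0S)] at hcomp
  rw [iteratedDeriv_eq_iteratedFDeriv]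
  simpa [T, iteratedFDeriv_comp_add_left, Function.comp_def] using
    congrArg (fun M => M fun _ => (1 : ℝ)) hcomp

theorem HasStrictFDerivAt.isLittleO_comp_add_pow_smul {f : E → F} {f' : E →L[ℝ] F} {x : E}
    (hf : HasStrictFDerivAt f f' x) {z : ℝ → E} (hz : Tendsto z (𝓝 0) (𝓝 x)) {a : ℕ}
    (ha : 0 < a) (v : E) :
    (fun t => f (z t + t ^ a • v) - f (z t) - t ^ a • f' v) =o[𝓝 0] fun t => t ^ a := by
  have hv : Tendsto (fun t : ℝ => t ^ a • v) (𝓝 0) (𝓝 0) := by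
    simpa [ha.ne'] using ((continuous_pow a).smul continuous_const).tendsto (0 : ℝ)
      (f := fun t : ℝ => t ^ a • v)
  have hpair : Tendsto (fun t => (z t + t ^ a • v, z t)) (𝓝 0) (𝓝 (x, x)) := by
    simpa using (hz.add hv).prodMk_nhds hz
  have hsmul : (fun t : ℝ => t ^ a • v) =O[𝓝 0] fun t => t ^ a :=
    isBigO_of_le' (c := ‖v‖) _ fun t => by rw [norm_smul, mul_comm]
  have hstrict := hf.isLittleO.comp_tendsto hpair
  simp only [Function.comp_def, add_sub_cancel_left, map_smul] at hstrict
  exact hstrict.trans_isBigO hsmul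

theorem isLittleO_comp_add_pow_smul_sub_expand {f : E → ℝ} {x : E} {a b : ℕ} (ha : 0 < a)
    (hb : 0 < b) (hf : ContDiffAt ℝ a f x) (v w : E) :
    (fun t => f (x + t ^ b • w + t ^ a • v) -
        (expand ℝ b (taylorPolynomial (fun u => f (x + u • w)) a) +
          C (fderiv ℝ f x v) * X ^ a).eval t) =o[𝓝 0] fun t => t ^ a := by
  set fLine := fun u : ℝ => f (x + u • w)
  have hfLine : ContDiffAt ℝ a fLine 0 :=
    (by simpa using hf : ContDiffAt ℝ a f (x + (0 : ℝ) • w)).comp 0 (by fun_prop)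
  have htb : Tendsto (fun t : ℝ => t ^ b) (𝓝 0) (𝓝 0) := by
    simpa [hb.ne'] using (continuous_pow b).tendsto (0 : ℝ)
  have hline : Tendsto (fun t : ℝ => x + t ^ b • w) (𝓝 0) (𝓝 x) := by
    simpa using tendsto_const_nhds.add (htb.smul_const w)
  have hstrict :=
    (hf.hasStrictFDerivAt (by simp [ha.ne'])).isLittleO_comp_add_pow_smul hline ha v
  have htaylor : (fun t => fLine (t ^ b) - (taylorPolynomial fLine a).eval (t ^ b)) =o[𝓝 0]
      fun t => t ^ a := by
    refine ((isLittleO_sub_taylorPolynomial hfLine).comp_tendsto htb).trans_isBigO ?_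
    simpa [Function.comp_def, ← pow_mul] using
      isBigO_pow_pow_of_le (𝕜 := ℝ) (Nat.le_mul_of_pos_left a hb)
  refine (hstrict.add htaylor).congr (fun t => ?_) fun t => rfl
  simp [fLine, expand_eval]
  ring

theorem iteratedDeriv_comp_add_pow_smul_div_factorial {f : E → ℝ} {x : E} {a b : ℕ}
    (ha : 0 < a) (hb : 0 < b) (hf : ContDiffAt ℝ a f x) (v w : E) {k : ℕ} (hk : k ≤ a) :
    iteratedDeriv k (fun t : ℝ => f (x + t ^ b • w + t ^ a • v)) 0 / (k ! : ℝ) =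
      (if b ∣ k then iteratedFDeriv ℝ (k / b) f x (fun _ => w) / ((k / b)! : ℝ) else 0) +
        (if k = a then fderiv ℝ f x v else 0) := by
  set g := fun t : ℝ => f (x + t ^ b • w + t ^ a • v)
  set Q :=
    expand ℝ b (taylorPolynomial (fun u => f (x + u • w)) a) + C (fderiv ℝ f x v) * X ^ a
  have hg : ContDiffAt ℝ a g 0 :=
    (by simpa [ha.ne', hb.ne'] using hf :
        ContDiffAt ℝ a f (x + (0 : ℝ) ^ b • w + (0 : ℝ) ^ a • v)).comp 0 (by fun_prop)
  have hdiff : (fun t => (taylorPolynomial g a - Q).eval t) =o[𝓝 0] fun t => t ^ a :=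
    ((isLittleO_comp_add_pow_smul_sub_expand ha hb hf v w).sub
      (isLittleO_sub_taylorPolynomial hg)).congr (fun t => by simp [g, Q]) fun _ => rfl
  have hcoeff := coeff_eq_zero_of_isLittleO_pow (hdiff.mono nhdsWithin_le_nhds) k hk
  have hkb : k / b ≤ a := (Nat.div_le_self k b).trans hk
  rw [coeff_sub, sub_eq_zero, coeff_add, coeff_expand hb, coeff_C_mul_X_pow,
    taylorPolynomial_coeff _ hk, taylorPolynomial_coeff _ hkb,
    iteratedDeriv_comp_add_smul hf (by exact_mod_cast hkb)] at hcoeff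
  exact hcoeff

end

/-- derivatives at `0` of `f ∘ c` for `c(t) = x + (t^a v', t^b v_d)`, with
`1 ≤ b ≤ a` and `f` of class `C^a` on an open neighborhood of the image of `c` near `t = 0`. -/
theorem stmt2 (e a b : ℕ) (hb : 0 < b) (hba : b ≤ a)
    (x : EuclideanSpace ℝ (Fin e) × ℝ) (v' : EuclideanSpace ℝ (Fin e)) (vd : ℝ)
    (f : EuclideanSpace ℝ (Fin e) × ℝ → ℝ)
    (U : Set (EuclideanSpace ℝ (Fin e) × ℝ)) (hU : IsOpen U)
    (ε : ℝ) (hε : 0 < ε)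
    (hmem : ∀ t : ℝ, |t| < ε → x + (t ^ a • v', t ^ b * vd) ∈ U)
    (hf : ContDiffOn ℝ (a : ℕ∞) f U) :
    (∀ j k : ℕ, 1 ≤ j → k = j * b → k < a →
      (1 / (Nat.factorial k : ℝ)) *
          iteratedDeriv k (fun t : ℝ => f (x + (t ^ a • v', t ^ b * vd))) 0
        = (1 / (Nat.factorial j : ℝ)) *
            iteratedFDerivWithin ℝ j f U x (fun _ => ((0 : EuclideanSpace ℝ (Fin e)), vd))) ∧
    (∀ k : ℕ, k < a → ¬ b ∣ k → k ≠ 0 →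
      iteratedDeriv k (fun t : ℝ => f (x + (t ^ a • v', t ^ b * vd))) 0 = 0) ∧
    (¬ b ∣ a →
      (1 / (Nat.factorial a : ℝ)) *
          iteratedDeriv a (fun t : ℝ => f (x + (t ^ a • v', t ^ b * vd))) 0
        = fderivWithin ℝ f U x (v', (0 : ℝ))) ∧
    (∀ j : ℕ, a = j * b →
      (1 / (Nat.factorial a : ℝ)) *
          iteratedDeriv a (fun t : ℝ => f (x + (t ^ a • v', t ^ b * vd))) 0
        = fderivWithin ℝ f U x (v', (0 : ℝ)) +
            (1 / (Nat.factorial j : ℝ)) *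
              iteratedFDerivWithin ℝ j f U x (fun _ => ((0 : EuclideanSpace ℝ (Fin e)), vd))) := by
  have ha : 0 < a := hb.trans_le hba
  have hxU : x ∈ U := by
    simpa [ha.ne', hb.ne', Prod.mk_zero_zero] using hmem 0 (by simpa using hε)
  have hcurve : (fun t : ℝ => f (x + (t ^ a • v', t ^ b * vd))) =
      fun t => f (x + t ^ b • ((0 : EuclideanSpace ℝ (Fin e)), vd) + t ^ a • (v', (0 : ℝ))) := by
    ext t; congr 1; ext <;> simp [add_comm]
  have key (k : ℕ) (hk : k ≤ a) :=
    iteratedDeriv_comp_add_pow_smul_div_factorial ha hb (hf.contDiffAt (hU.mem_nhds hxU))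
      (v', (0 : ℝ)) ((0 : EuclideanSpace ℝ (Fin e)), vd) hk
  simp only [hcurve, fderivWithin_of_isOpen hU hxU, iteratedFDerivWithin_of_isOpen _ hU hxU]
  refine ⟨?_, ?_, ?_, ?_⟩
  · rintro j k - rfl hk
    have hj := key (j * b) hk.le
    rw [Nat.mul_div_cancel _ hb] at hj
    simpa [div_eq_inv_mul, hk.ne] using hj
  · rintro k hk hbk -
    simpa [hbk, hk.ne, Nat.factorial_ne_zero] using key k hk.le
  · intro hba
    simpa [div_eq_inv_mul, hba] using key a le_rfl
  · rintro j rfl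
    have hj := key (j * b) le_rfl
    rw [Nat.mul_div_cancel _ hb] at hj
    simpa [div_eq_inv_mul, add_comm] using hj
end

section
/- Let y ∈ ℝ^d, x ∈ ℝ^d, r ≥ 1 an integer, and γ(t) = x + t^r y. If f is C^{rj} near x, then (1/(rj)!)(f∘γ)^{(rj)}(0) = (1/j!) f^{(j)}(x)(y^j), and (f∘γ)^{(k)}(0) = 0 whenever k is not a multiple of r. -/
/-!
Compare two expansions of `φ t = f (x + t ^ r • y)` at `0` to order `r * j`: Peano's form of
Taylor's theorem for `φ` itself, and the order-`j` expansion of `g s = f (x + s • y)` evaluated at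
`s = t ^ r`, whose remainder `o(s ^ j)` becomes `o(t ^ (r * j))`. A polynomial of degree at most
`r * j` that is `o(t ^ (r * j))` vanishes, so `φ⁽ᵏ⁾(0) / k!` equals `g⁽ᵏᐟʳ⁾(0) / (k / r)!` when
`r ∣ k` and `0` otherwise. Finally `g⁽ᵐ⁾(0) = f⁽ᵐ⁾(x)(y, …, y)`, as `g` is `f` along a line.
-/

open Asymptotics Filter Finset Topology Pointwise
open scoped Nat

theorem taylor_isLittleO_of_contDiffAt {E : Type*} [NormedAddCommGroup E] [NormedSpace ℝ E]
    {f : ℝ → E} {x₀ : ℝ} {n : ℕ} (hf : ContDiffAt ℝ n f x₀) :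
    (fun x ↦ f x - ∑ k ∈ range (n + 1), ((k ! : ℝ)⁻¹ * (x - x₀) ^ k) • iteratedDeriv k f x₀)
      =o[𝓝 x₀] fun x ↦ (x - x₀) ^ n := by
  obtain ⟨u, hu, hfu⟩ := hf.contDiffOn le_rfl (by simp)
  obtain ⟨ε, hε, hball⟩ := Metric.mem_nhds_iff.1 hu
  have hx₀ : x₀ ∈ Metric.ball x₀ ε := Metric.mem_ball_self hε
  have h := taylor_isLittleO (convex_ball x₀ ε) hx₀ (hfu.mono hball)
  rw [Metric.isOpen_ball.nhdsWithin_eq hx₀] at h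
  simpa only [taylor_within_apply, iteratedDerivWithin_of_isOpen Metric.isOpen_ball hx₀] using h

section CoefficientUniqueness

variable {𝕜 E : Type*} [NontriviallyNormedField 𝕜] [NormedAddCommGroup E] [NormedSpace 𝕜 E]

theorem eq_zero_of_pow_smul_isLittleO {a : E} {n : ℕ}
    (h : (fun t : 𝕜 ↦ t ^ n • a) =o[𝓝 0] fun t ↦ t ^ n) : a = 0 := by
  by_contra ha
  have hpow : (fun t : 𝕜 ↦ ‖t ^ n‖) =o[𝓝 0] fun t ↦ t ^ n := by
    refine (isLittleO_const_mul_left_iff (norm_ne_zero_iff.2 ha)).1 ?_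
    simpa only [norm_smul, mul_comm ‖a‖] using h.norm_left
  refine isLittleO_irrefl ?_ hpow.of_norm_left
  exact (eventually_nhdsWithin_of_forall (s := {(0 : 𝕜)}ᶜ) fun t ht ↦ pow_ne_zero n ht).frequently
    |>.filter_mono nhdsWithin_le_nhds

theorem eq_zero_of_sum_pow_smul_isLittleO {a : ℕ → E} {n : ℕ}
    (h : (fun t : 𝕜 ↦ ∑ k ∈ range (n + 1), t ^ k • a k) =o[𝓝 0] fun t ↦ t ^ n) :
    ∀ k ≤ n, a k = 0 := by
  induction n with
  | zero =>
    simpa using eq_zero_of_pow_smul_isLittleO (by simpa only [zero_add, sum_range_one] using h)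
  | succ n ih =>
    have htop : (fun t : 𝕜 ↦ t ^ (n + 1) • a (n + 1)) =o[𝓝 0] fun t ↦ t ^ n :=
      (isBigO_of_le' (c := ‖a (n + 1)‖) (𝓝 0) fun t ↦ by rw [norm_smul, mul_comm]).trans_isLittleO
        (isLittleO_pow_pow n.lt_succ_self)
    have hlow : ∀ k ≤ n, a k = 0 := ih <| by
      simpa only [sum_range_succ _ (n + 1), add_sub_cancel_right] using
        (h.trans (isLittleO_pow_pow n.lt_succ_self)).sub htop
    have hsum : ∀ t : 𝕜, ∑ k ∈ range (n + 2), t ^ k • a k = t ^ (n + 1) • a (n + 1) := fun t ↦ by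
      rw [sum_range_succ, sum_eq_zero fun k hk ↦ by
        rw [hlow k (Nat.lt_succ_iff.1 (mem_range.1 hk)), smul_zero], zero_add]
    have hlast : a (n + 1) = 0 := eq_zero_of_pow_smul_isLittleO (by simpa only [hsum] using h)
    intro k hk
    rcases Nat.of_le_succ hk with hk | rfl
    exacts [hlow k hk, hlast]

end CoefficientUniqueness

theorem sum_range_mul_eq_sum_range_ite_dvd {M : Type*} [AddCommMonoid M] {r : ℕ} (hr : 0 < r)
    (j : ℕ) (F : ℕ → M) :
    ∑ m ∈ range (j + 1), F (r * m) = ∑ k ∈ range (r * j + 1), if r ∣ k then F k else 0 := by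
  rw [← sum_filter]
  refine sum_nbij' (r * ·) (· / r) ?_ ?_ ?_ ?_ fun _ _ ↦ rfl
  · intro m hm
    simp only [mem_range, mem_filter, dvd_mul_right, and_true] at hm ⊢
    nlinarith
  · intro k hk
    obtain ⟨hk, m, rfl⟩ := mem_filter.1 hk
    rw [Nat.mul_div_cancel_left m hr, mem_range, Nat.lt_succ_iff]
    exact Nat.le_of_mul_le_mul_left (Nat.lt_succ_iff.1 (mem_range.1 hk)) hr
  · intro m _
    exact Nat.mul_div_cancel_left m hr
  · intro k hk
    exact Nat.mul_div_cancel' (mem_filter.1 hk).2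

theorem iteratedDeriv_comp_pow_eq_ite {E : Type*} [NormedAddCommGroup E] [NormedSpace ℝ E]
    {g : ℝ → E} {r j : ℕ} (hr : 0 < r) (hg : ContDiffAt ℝ (r * j) g 0) {k : ℕ} (hk : k ≤ r * j) :
    (k ! : ℝ)⁻¹ • iteratedDeriv k (fun t ↦ g (t ^ r)) 0 =
      if r ∣ k then ((k / r)! : ℝ)⁻¹ • iteratedDeriv (k / r) g 0 else 0 := by
  have hpow : Tendsto (fun t : ℝ ↦ t ^ r) (𝓝 0) (𝓝 0) := by
    simpa [zero_pow hr.ne'] using (continuous_pow r).tendsto (0 : ℝ)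
  have hcomp : ContDiffAt ℝ (r * j) (fun t ↦ g (t ^ r)) 0 :=
    ContDiffAt.comp (g := g) 0 (by simpa [zero_pow hr.ne'] using hg) (contDiff_id.pow r).contDiffAt
  have taylor_comp := taylor_isLittleO_of_contDiffAt hcomp
  simp only [sub_zero] at taylor_comp
  have taylor_g : (fun t : ℝ ↦ g (t ^ r) - ∑ m ∈ range (j + 1),
      ((m ! : ℝ)⁻¹ * (t ^ r) ^ m) • iteratedDeriv m g 0) =o[𝓝 0] fun t ↦ t ^ (r * j) := by
    simpa only [sub_zero, Function.comp_def, ← pow_mul] using (taylor_isLittleO_of_contDiffAt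
      (hg.of_le (mod_cast Nat.le_mul_of_pos_left j hr))).comp_tendsto hpow
  set c : ℕ → E := fun k ↦ if r ∣ k then ((k / r)! : ℝ)⁻¹ • iteratedDeriv (k / r) g 0 else 0
  have hsub := taylor_g.sub taylor_comp
  refine sub_eq_zero.1 <| eq_zero_of_sum_pow_smul_isLittleO (𝕜 := ℝ) (n := r * j)
    (a := fun k ↦ (k ! : ℝ)⁻¹ • iteratedDeriv k (fun t ↦ g (t ^ r)) 0 - c k) ?_ k hk
  refine hsub.congr_left fun t ↦ ?_
  have hreindex : ∑ m ∈ range (j + 1), ((m ! : ℝ)⁻¹ * (t ^ r) ^ m) • iteratedDeriv m g 0 =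
      ∑ k ∈ range (r * j + 1), t ^ k • c k := by
    simp only [c, smul_ite, smul_zero]
    rw [← sum_range_mul_eq_sum_range_ite_dvd hr j
      fun k ↦ t ^ k • ((k / r)! : ℝ)⁻¹ • iteratedDeriv (k / r) g 0]
    refine sum_congr rfl fun m _ ↦ ?_
    rw [Nat.mul_div_cancel_left m hr, mul_comm, mul_smul, pow_mul]
  rw [hreindex]
  simp only [smul_sub, sum_sub_distrib, mul_comm _ (t ^ _), mul_smul]
  abel

theorem iteratedDeriv_comp_add_smul_zero {𝕜 E F : Type*} [NontriviallyNormedField 𝕜]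
    [NormedAddCommGroup E] [NormedSpace 𝕜 E] [NormedAddCommGroup F] [NormedSpace 𝕜 F]
    {f : E → F} {U : Set E} {n : ℕ} (hU : IsOpen U) (hf : ContDiffOn 𝕜 n f U) {x : E}
    (hx : x ∈ U) (y : E) {k : ℕ} (hk : k ≤ n) :
    iteratedDeriv k (fun t : 𝕜 ↦ f (x + t • y)) 0 = iteratedFDerivWithin 𝕜 k f U x (fun _ ↦ y) := by
  set L : 𝕜 →L[𝕜] E := (1 : 𝕜 →L[𝕜] 𝕜).smulRight y
  set V : Set E := -x +ᵥ U
  have hV : IsOpen V := hU.vadd (-x)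
  have hL0 : L 0 ∈ V := by simpa [V, L] using Set.vadd_mem_vadd_set (a := -x) hx
  have hshift : ContDiffOn 𝕜 n (fun z ↦ f (x + z)) V :=
    hf.comp (contDiff_const.add contDiff_id).contDiffOn fun z hz ↦ by
      simpa [V, Set.mem_vadd_set_iff_neg_vadd_mem] using hz
  have h := L.iteratedFDerivWithin_comp_right hshift hV.uniqueDiffOn
    (hV.preimage L.continuous).uniqueDiffOn hL0 (i := k) (mod_cast hk)
  rw [iteratedFDerivWithin_of_isOpen k (hV.preimage L.continuous) hL0,
    iteratedFDerivWithin_comp_add_left, vadd_neg_vadd] at h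
  have hcomp : (fun t : 𝕜 ↦ f (x + t • y)) = (fun z ↦ f (x + z)) ∘ L := by
    ext t; simp [L]
  rw [iteratedDeriv_eq_iteratedFDeriv, hcomp, h]
  simp [L]

/-- for `γ(t) = x + t^r y` and `f` of class `C^{rj}` near `x`,
`(1/(rj)!)(f∘γ)^{(rj)}(0) = (1/j!) f^{(j)}(x)(y^j)`, and `(f∘γ)^{(k)}(0) = 0`
whenever `k` is not a multiple of `r`. -/
theorem stmt3 (e r j : ℕ) (hr : 1 ≤ r)
    (x y : EuclideanSpace ℝ (Fin e)) (f : EuclideanSpace ℝ (Fin e) → ℝ)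
    (U : Set (EuclideanSpace ℝ (Fin e))) (hU : IsOpen U) (hx : x ∈ U)
    (hf : ContDiffOn ℝ ((r * j : ℕ) : ℕ∞) f U) :
    (1 / (Nat.factorial (r * j) : ℝ)) *
        iteratedDeriv (r * j) (fun t : ℝ => f (x + t ^ r • y)) 0
      = (1 / (Nat.factorial j : ℝ)) * iteratedFDerivWithin ℝ j f U x (fun _ => y) ∧
    ∀ k : ℕ, k ≤ r * j → ¬ r ∣ k →
      iteratedDeriv k (fun t : ℝ => f (x + t ^ r • y)) 0 = 0 := by
  have hg : ContDiffAt ℝ (r * j) (fun s : ℝ ↦ f (x + s • y)) 0 :=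
    (hf.contDiffAt (hU.mem_nhds (by simpa using hx))).comp 0
      (contDiff_const.add (contDiff_id.smul contDiff_const)).contDiffAt
  have hcoeff k (hk : k ≤ r * j) := iteratedDeriv_comp_pow_eq_ite hr hg hk
  constructor
  · have hdiag := hcoeff (r * j) le_rfl
    rw [if_pos (dvd_mul_right r j), Nat.mul_div_cancel_left j hr,
      iteratedDeriv_comp_add_smul_zero hU hf hx y (Nat.le_mul_of_pos_left j hr)] at hdiag
    simpa only [one_div, smul_eq_mul] using hdiag
  · intro k hk hrk
    have hk0 := hcoeff k hk
    rw [if_neg hrk, smul_eq_zero] at hk0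
    exact hk0.resolve_left (inv_ne_zero (mod_cast k.factorial_ne_zero))
end

section
/- Glaeser's inequality: if u : ℝ → [0,∞) is twice differentiable with bounded second derivative, then for every t ∈ ℝ, u'(t)² ≤ 2 u(t) · sup_{s∈ℝ} |u''(s)|. -/
/-!
Since `u'' ≤ M := sup |u''|`, Taylor's bound gives `0 ≤ u (t + h) ≤ u t + u' t * h + M / 2 * h ^ 2`
for every `h`. A quadratic polynomial that is nonnegative on all of `ℝ` has nonpositive
discriminant, which is exactly `u' t ^ 2 ≤ 2 * u t * M`.
-/

open Set

theorem isMinOn_univ_of_hasDerivAt_of_nonneg {g g' g'' : ℝ → ℝ}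
    (hg : ∀ x, HasDerivAt g (g' x) x) (hg' : ∀ x, HasDerivAt g' (g'' x) x)
    (hg'' : ∀ x, 0 ≤ g'' x) {x : ℝ} (hx : g' x = 0) : IsMinOn g univ x := by
  have hderiv : deriv g = g' := funext fun y => (hg y).deriv
  have hmono : Monotone g' := monotone_of_hasDerivAt_nonneg hg' hg''
  have hconv : ConvexOn ℝ univ g :=
    Monotone.convexOn_univ_of_deriv (fun y => (hg y).differentiableAt) (hderiv ▸ hmono)
  refine hconv.isMinOn_of_rightDeriv_eq_zero (by simp) ?_
  rw [(hg x).hasDerivWithinAt.derivWithin (uniqueDiffWithinAt_Ioi x), hx]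

theorem le_add_mul_add_sq_of_hasDerivAt_of_le {f f' f'' : ℝ → ℝ} {M : ℝ}
    (hf : ∀ x, HasDerivAt f (f' x) x) (hf' : ∀ x, HasDerivAt f' (f'' x) x)
    (hM : ∀ x, f'' x ≤ M) (x h : ℝ) :
    f (x + h) ≤ f x + f' x * h + M / 2 * h ^ 2 := by
  set g : ℝ → ℝ := fun y => f x + f' x * (y - x) + M / 2 * (y - x) ^ 2 - f y
  have hg : ∀ y, HasDerivAt g (f' x + M * (y - x) - f' y) y := fun y =>
    (((((hasDerivAt_id' y).sub_const x).const_mul (f' x)).const_add (f x)).add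
      ((((hasDerivAt_id' y).sub_const x).pow 2).const_mul (M / 2))).sub (hf y)
      |>.congr_deriv (by norm_num; ring)
  have hg' : ∀ y, HasDerivAt (fun y => f' x + M * (y - x) - f' y) (M - f'' y) y := fun y =>
    ((((hasDerivAt_id' y).sub_const x).const_mul M).const_add (f' x)).sub (hf' y)
      |>.congr_deriv (by ring)
  have hmin := isMinOn_univ_of_hasDerivAt_of_nonneg hg hg' (fun y => sub_nonneg.2 (hM y))
    (x := x) (by ring) (mem_univ (x + h))
  simpa [g] using hmin

theorem sq_le_of_forall_nonneg_quadratic {a b c : ℝ}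
    (h : ∀ x, 0 ≤ a + b * x + c / 2 * x ^ 2) : b ^ 2 ≤ 2 * a * c := by
  have := discrim_le_zero (a := c / 2) (b := b) (c := a) fun x => by linarith [h x, sq x]
  rw [discrim] at this
  linarith

/-- Glaeser's inequality: if `u : ℝ → [0,∞)` is twice differentiable with
bounded second derivative, then `u'(t)² ≤ 2 u(t) · sup_s |u''(s)|` for every `t`. -/
theorem stmt4 (u u' u'' : ℝ → ℝ)
    (hu : ∀ t, 0 ≤ u t)
    (hd1 : ∀ t, HasDerivAt u (u' t) t)
    (hd2 : ∀ t, HasDerivAt u' (u'' t) t)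
    (hbdd : BddAbove (Set.range fun s => |u'' s|)) (t : ℝ) :
    u' t ^ 2 ≤ 2 * u t * ⨆ s, |u'' s| := by
  have hM : ∀ s, u'' s ≤ ⨆ s, |u'' s| := fun s => (le_abs_self _).trans (le_ciSup hbdd s)
  refine sq_le_of_forall_nonneg_quadratic fun h => ?_
  exact (hu (t + h)).trans (le_add_mul_add_sq_of_hasDerivAt_of_le hd1 hd2 hM t h)
end

section
/- Fix α ∈ (0,1), let X = {(x,y) ∈ ℝ² : x ≥ 0, |y| ≤ x^{1/α}}, and for n ∈ ℕ define f_n : X → ℝ by f_n(x,y) = y^{n+1}/x for x ≠ 0 and f_n(0,y) = 0. Then f_n is C^∞ on the interior of X, and all partial derivatives ∂_x^ℓ ∂_y^m f_n with ℓ + m ≤ n extend continuously to the boundary of X, while ∂_y^{n+1} f_n does not extend continuously to the boundary point 0. In particular f_n ∈ C^n(X) \ C^{n+1}(X). -/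
open Set Filter

private lemma iterate_deriv_const_mul (c : ℝ) (h : ℝ → ℝ) (ℓ : ℕ) :
    deriv^[ℓ] (fun s => c * h s) = fun s => c * deriv^[ℓ] h s := by
  induction ℓ with
  | zero => rfl
  | succ k ih => simp only [Function.iterate_succ_apply', ih, deriv_const_mul_field']

/-- iterated y-derivative of `u ↦ u^(n+1)/s`, valid for every `s` (Lean convention). -/
private lemma inner_id (n m : ℕ) (s y : ℝ) :
    iteratedDeriv m (fun u : ℝ => u ^ (n + 1) / s) y =
      ((∏ i ∈ Finset.range m, ((n + 1 : ℕ) - i : ℝ)) * y ^ (n + 1 - m)) * s⁻¹ := by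
  have h1 : (fun u : ℝ => u ^ (n + 1) / s) = fun u => s⁻¹ * u ^ (n + 1) := by
    funext u; rw [div_eq_mul_inv, mul_comm]
  rw [h1, iteratedDeriv_eq_iterate, iterate_deriv_const_mul]
  simp only [iter_deriv_pow]
  ring

/-- iterated x-derivative of `s ↦ c * s⁻¹`. -/
private lemma iter_const_inv (c : ℝ) (ℓ : ℕ) (x : ℝ) :
    iteratedDeriv ℓ (fun s : ℝ => c * s⁻¹) x =
      c * ((∏ i ∈ Finset.range ℓ, (-1 - i : ℝ)) * x ^ (-1 - ℓ : ℤ)) := by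
  have h1 : (fun s : ℝ => c * s⁻¹) = fun s => c * Inv.inv s := rfl
  rw [h1, iteratedDeriv_eq_iterate, iterate_deriv_const_mul, iter_deriv_inv']
  simp only
  congr 2
  induction ℓ with
  | zero => simp
  | succ k ih => rw [Finset.prod_range_succ, ← ih, Nat.factorial_succ]; push_cast; ring

/-- on `X = {(x,y) : x ≥ 0, |y| ≤ x^{1/α}}` (with `α ∈ (0,1)` fixed) the
function `f_n(x,y) = y^{n+1}/x` (with `f_n(0,y) = 0`; note `r/0 = 0` in Lean) is `C^∞` on
the interior of `X`, all partial derivatives `∂_x^ℓ ∂_y^m f_n` with `ℓ + m ≤ n` extend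
continuously to `X`, but `∂_y^{n+1} f_n` has no limit at the boundary point `0`. -/
theorem stmt7 (α : ℝ) (hα0 : 0 < α) (hα1 : α < 1) (n : ℕ)
    (X : Set (ℝ × ℝ)) (hX : X = {p : ℝ × ℝ | 0 ≤ p.1 ∧ |p.2| ≤ p.1 ^ (1 / α)})
    (f : ℝ × ℝ → ℝ) (hf : ∀ p : ℝ × ℝ, f p = p.2 ^ (n + 1) / p.1) :
    ContDiffOn ℝ (⊤ : ℕ∞) f (interior X) ∧
    (∀ ℓ m : ℕ, ℓ + m ≤ n →
      ∃ g : ℝ × ℝ → ℝ, ContinuousOn g X ∧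
        ∀ p ∈ interior X,
          g p = iteratedDeriv ℓ (fun s : ℝ => iteratedDeriv m (fun u : ℝ => f (s, u)) p.2) p.1) ∧
    ¬ ∃ L : ℝ, Tendsto (fun p : ℝ × ℝ => iteratedDeriv (n + 1) (fun u : ℝ => f (p.1, u)) p.2)
        (nhdsWithin (0, 0) (interior X)) (nhds L) := by
  have hfe : f = fun p : ℝ × ℝ => p.2 ^ (n + 1) / p.1 := funext hf
  subst hfe
  have hα : 1 < 1 / α := (one_lt_div hα0).2 hα1
  -- interior points have positive first coordinate
  have hIX : ∀ p ∈ interior X, 0 < p.1 := by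
    intro p hp
    obtain ⟨ε, hε, hball⟩ := Metric.isOpen_iff.1 isOpen_interior p hp
    by_contra hle
    push_neg at hle
    have hd : dist ((p.1 - ε / 2, p.2) : ℝ × ℝ) p < ε := by
      rw [Prod.dist_eq]
      have h1 : dist (p.1 - ε / 2) p.1 = ε / 2 := by
        rw [Real.dist_eq, show p.1 - ε / 2 - p.1 = -(ε / 2) by ring, abs_neg,
          abs_of_pos (by linarith)]
      rw [h1, dist_self, max_eq_left (by linarith : (0:ℝ) ≤ ε / 2)]
      linarith
    have hmem : ((p.1 - ε / 2, p.2) : ℝ × ℝ) ∈ X := interior_subset (hball hd)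
    rw [hX] at hmem
    have := hmem.1
    simp only at this
    linarith
  refine ⟨?_, ?_, ?_⟩
  · -- smoothness on the interior
    intro p hp
    exact (((contDiff_snd.pow (n + 1)).contDiffAt.div contDiff_fst.contDiffAt
      (hIX p hp).ne')).contDiffWithinAt
  · -- extension of the derivatives
    intro ℓ m hlm
    set a : ℕ := n + 1 - m with ha
    set b : ℕ := ℓ + 1 with hb
    have hba : b ≤ a := by omega
    have ha1 : 1 ≤ a := by omega
    set C : ℝ := (∏ i ∈ Finset.range m, ((n + 1 : ℕ) - i : ℝ)) *
      (∏ i ∈ Finset.range ℓ, (-1 - i : ℝ)) with hC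
    refine ⟨fun p => C * (p.2 ^ a / p.1 ^ b), ?_, ?_⟩
    · -- continuity on X
      have hXpos : ∀ q ∈ X, 0 ≤ q.1 := by intro q hq; rw [hX] at hq; exact hq.1
      intro p hp
      rcases eq_or_lt_of_le (hXpos p hp) with h0 | h0
      · -- the cusp point
        have hp2 : p.2 = 0 := by
          rw [hX] at hp
          have := hp.2
          rw [← h0, Real.zero_rpow (by positivity : (1 : ℝ) / α ≠ 0)] at this
          exact abs_nonpos_iff.1 this
        have hval : C * (p.2 ^ a / p.1 ^ b) = 0 := by
          rw [hp2, zero_pow (by omega), zero_div, mul_zero]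
        rw [ContinuousWithinAt, hval]
        set e : ℝ := (a : ℝ) * (1 / α) - b with he
        have hepos : 0 < e := by
          have h1 : (b : ℝ) ≤ a := by exact_mod_cast hba
          have hb1 : (1 : ℝ) ≤ b := by exact_mod_cast (by omega : 1 ≤ b)
          have h2 : (b : ℝ) * 1 < (b : ℝ) * (1 / α) :=
            mul_lt_mul_of_pos_left hα (by linarith)
          have h3 : (b : ℝ) * (1 / α) ≤ (a : ℝ) * (1 / α) :=
            mul_le_mul_of_nonneg_right h1 (by positivity)
          rw [he]; nlinarith
        have hbound : ∀ q ∈ X, |C * (q.2 ^ a / q.1 ^ b)| ≤ |C| * q.1 ^ e := by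
          intro q hq
          rw [hX] at hq
          obtain ⟨hq1, hq2⟩ := hq
          rcases eq_or_lt_of_le hq1 with hq0 | hq0
          · have hq2' : q.2 = 0 := by
              rw [← hq0, Real.zero_rpow (by positivity : (1 : ℝ) / α ≠ 0)] at hq2
              exact abs_nonpos_iff.1 hq2
            rw [hq2', zero_pow (by omega), zero_div, mul_zero, abs_zero]
            positivity
          · have key : |q.2| ^ a ≤ (q.1 ^ ((1 : ℝ) / α)) ^ a :=
              pow_le_pow_left₀ (abs_nonneg _) hq2 a
            have hrw : (q.1 ^ ((1 : ℝ) / α)) ^ a / q.1 ^ b = q.1 ^ e := by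
              rw [← Real.rpow_natCast (q.1 ^ ((1 : ℝ) / α)) a, ← Real.rpow_natCast q.1 b,
                ← Real.rpow_mul hq1, ← Real.rpow_sub hq0]
              ring_nf
              rw [he]; ring_nf
            calc |C * (q.2 ^ a / q.1 ^ b)| = |C| * (|q.2| ^ a / q.1 ^ b) := by
                  rw [abs_mul, abs_div, abs_pow, abs_pow, abs_of_pos hq0]
              _ ≤ |C| * ((q.1 ^ ((1 : ℝ) / α)) ^ a / q.1 ^ b) := by
                  gcongr
              _ = |C| * q.1 ^ e := by rw [hrw]
        have hM : Tendsto (fun q : ℝ × ℝ => |C| * q.1 ^ e) (nhdsWithin p X) (nhds 0) := by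
          have hc : ContinuousAt (fun q : ℝ × ℝ => |C| * q.1 ^ e) p := by
            apply ContinuousAt.mul continuousAt_const
            exact (Real.continuousAt_rpow_const p.1 e (Or.inr hepos.le)).comp
              continuous_fst.continuousAt
          have := hc.continuousWithinAt (s := X)
          rw [ContinuousWithinAt, ← h0, Real.zero_rpow hepos.ne', mul_zero] at this
          exact this
        apply squeeze_zero_norm' _ hM
        filter_upwards [self_mem_nhdsWithin] with q hq
        rw [Real.norm_eq_abs]
        exact hbound q hq
      · -- interior-direction points with positive x
        apply ContinuousAt.continuousWithinAt
        exact continuousAt_const.mul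
          (((continuous_snd.pow a).continuousAt).div
            ((continuous_fst.pow b).continuousAt) (pow_ne_zero b h0.ne'))
    · -- identification with the iterated derivative on the interior
      intro p hp
      have hsimp : (fun s : ℝ => iteratedDeriv m
          (fun u : ℝ => (((s, u) : ℝ × ℝ).2) ^ (n + 1) / ((s, u) : ℝ × ℝ).1) p.2) =
          fun s : ℝ => ((∏ i ∈ Finset.range m, ((n + 1 : ℕ) - i : ℝ)) * p.2 ^ (n + 1 - m)) * s⁻¹ := by
        funext s
        exact inner_id n m s p.2
      rw [hsimp, iter_const_inv]
      have hzp : p.1 ^ (-1 - (ℓ : ℤ)) = (p.1 ^ (ℓ + 1))⁻¹ := by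
        rw [show (-1 - (ℓ : ℤ)) = -((ℓ + 1 : ℕ) : ℤ) by push_cast; ring, zpow_neg, zpow_natCast]
      rw [hzp, hC]
      field_simp
      ring
  · -- no limit of the (n+1)-st y-derivative at the origin
    rintro ⟨L, hL⟩
    set D : ℝ := ∏ i ∈ Finset.range (n + 1), ((n + 1 : ℕ) - i : ℝ) with hD
    have hDpos : 0 < D := by
      apply Finset.prod_pos
      intro i hi
      rw [Finset.mem_range] at hi
      have : (i : ℝ) < (n + 1 : ℕ) := by exact_mod_cast hi
      linarith
    have hrw : (fun p : ℝ × ℝ => iteratedDeriv (n + 1)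
        (fun u : ℝ => (((p.1, u) : ℝ × ℝ).2) ^ (n + 1) / ((p.1, u) : ℝ × ℝ).1) p.2) =
        fun p : ℝ × ℝ => D * p.1⁻¹ := by
      funext p
      rw [inner_id n (n + 1) p.1 p.2]
      simp [hD]
    rw [hrw] at hL
    -- the path t ↦ (t, 0)
    have hpath : Tendsto (fun t : ℝ => ((t, 0) : ℝ × ℝ)) (nhdsWithin 0 (Ioi 0))
        (nhdsWithin (0, 0) (interior X)) := by
      apply tendsto_nhdsWithin_of_tendsto_nhds_of_eventually_within
      · exact ((continuous_id.prodMk continuous_const).tendsto 0).mono_left nhdsWithin_le_nhds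
      · filter_upwards [self_mem_nhdsWithin] with t ht
        have hUopen : IsOpen {p : ℝ × ℝ | 0 < p.1 ∧ |p.2| < p.1 ^ ((1 : ℝ) / α)} := by
          apply IsOpen.inter (isOpen_lt continuous_const continuous_fst)
          exact isOpen_lt (continuous_abs.comp continuous_snd)
            ((Real.continuous_rpow_const (by positivity)).comp continuous_fst)
        have hsub : {p : ℝ × ℝ | 0 < p.1 ∧ |p.2| < p.1 ^ ((1 : ℝ) / α)} ⊆ X := by
          intro q hq
          rw [hX]
          exact ⟨hq.1.le, hq.2.le⟩
        apply interior_maximal hsub hUopen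
        exact ⟨ht, by simpa using Real.rpow_pos_of_pos ht _⟩
    have h1 : Tendsto (fun t : ℝ => D * t⁻¹) (nhdsWithin 0 (Ioi 0)) (nhds L) := hL.comp hpath
    have h2 : Tendsto (fun t : ℝ => D * t⁻¹) (nhdsWithin 0 (Ioi 0)) atTop :=
      tendsto_inv_nhdsGT_zero.const_mul_atTop hDpos
    exact not_tendsto_nhds_of_tendsto_atTop h2 L h1
end

section
/- Let (c_n) be a sequence of polynomial curves ℝ → ℝ^d of uniformly bounded degree. If the sequence n ↦ sup_{t∈[−1,1]} |c_n(t)| converges fast to 0 (i.e., n^k sup_{[−1,1]}|c_n| → 0 for every k), then c_n converges fast to 0 in C^∞(ℝ,ℝ^d), i.e., for every k and every compact K ⊆ ℝ and every derivative order j, n^k sup_{t∈K}|c_n^{(j)}(t)| is bounded. -/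
open Filter Polynomial

/-- Nodes for Lagrange interpolation, lying in `[0,1] ⊆ [-1,1]`. -/
noncomputable def stmt12Node (N : ℕ) (s : ℕ) : ℝ := s / (N + 1)

lemma stmt12Node_mem (N : ℕ) {s : ℕ} (hs : s ∈ Finset.range (N + 1)) :
    stmt12Node N s ∈ Set.Icc (-1 : ℝ) 1 := by
  have hs' : (s : ℝ) ≤ N + 1 := by
    have := Finset.mem_range.mp hs
    exact_mod_cast this.le
  have hpos : (0 : ℝ) < N + 1 := by positivity
  constructor
  · have h0 : (0 : ℝ) ≤ s / (N + 1) := by positivity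
    show (-1 : ℝ) ≤ s / (N + 1); linarith
  · exact (div_le_one hpos).mpr hs'

lemma stmt12Node_injOn (N : ℕ) :
    Set.InjOn (stmt12Node N) ↑(Finset.range (N + 1)) := by
  intro a _ b _ hab
  have hpos : ((N : ℝ) + 1) ≠ 0 := by positivity
  have : (a : ℝ) = b := by
    rw [stmt12Node, stmt12Node, div_left_inj' hpos] at hab
    exact_mod_cast hab
  exact_mod_cast this

lemma stmt12_contDiff_eval (q : ℝ[X]) : ContDiff ℝ (⊤ : ℕ∞) fun x : ℝ => q.eval x := by
  induction q using Polynomial.induction_on' with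
  | add p q hp hq => simpa using hp.add hq
  | monomial n a =>
      simpa [Polynomial.eval_monomial] using (contDiff_const (c := a)).mul (contDiff_id.pow n)

lemma stmt12_iteratedDeriv_eval (j : ℕ) (q : ℝ[X]) :
    iteratedDeriv j (fun x : ℝ => q.eval x) = fun x => (derivative^[j] q).eval x := by
  induction j generalizing q with
  | zero => simp
  | succ j ih =>
      rw [iteratedDeriv_succ']
      have : (deriv fun x : ℝ => q.eval x) = fun x => q.derivative.eval x := by
        funext x; exact Polynomial.deriv (p := q)
      rw [this, ih, Function.iterate_succ_apply]

/-- Key finite-dimensionality bound via Lagrange interpolation: a polynomial of degree `≤ N`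
has its `j`-th derivative on a compact set `K` controlled by its values at the nodes. -/
lemma stmt12_key (N j : ℕ) (K : Set ℝ) (hK : IsCompact K) :
    ∃ B : ℝ, 0 ≤ B ∧ ∀ q : ℝ[X], q.natDegree ≤ N → ∀ M : ℝ,
      (∀ s ∈ Finset.range (N + 1), |q.eval (stmt12Node N s)| ≤ M) →
      ∀ t ∈ K, |(derivative^[j] q).eval t| ≤ B * M := by
  -- bound the derivatives of the Lagrange basis polynomials on K
  have hbnd : ∀ s : ℕ, ∃ C : ℝ, 0 ≤ C ∧ ∀ t ∈ K,
      |(derivative^[j] (Lagrange.basis (Finset.range (N + 1)) (stmt12Node N) s)).eval t| ≤ C := by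
    intro s
    obtain ⟨C, hC⟩ := hK.exists_bound_of_continuousOn
      (f := fun t => (derivative^[j]
        (Lagrange.basis (Finset.range (N + 1)) (stmt12Node N) s)).eval t)
      ((Polynomial.continuous _).continuousOn)
    refine ⟨max C 0, le_max_right _ _, fun t ht => ?_⟩
    calc |_| = ‖(derivative^[j]
          (Lagrange.basis (Finset.range (N + 1)) (stmt12Node N) s)).eval t‖ := rfl
      _ ≤ C := hC t ht
      _ ≤ max C 0 := le_max_left _ _
  choose Cb hCb0 hCb using hbnd
  refine ⟨∑ s ∈ Finset.range (N + 1), Cb s, Finset.sum_nonneg fun s _ => hCb0 s, ?_⟩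
  intro q hq M hM t ht
  have hM0 : 0 ≤ M := le_trans (abs_nonneg _) (hM 0 (Finset.mem_range.mpr (Nat.succ_pos N)))
  -- Lagrange interpolation
  have hdeg : q.degree < (Finset.range (N + 1)).card := by
    rw [Finset.card_range]
    calc q.degree ≤ (q.natDegree : WithBot ℕ) := Polynomial.degree_le_natDegree
      _ ≤ (N : WithBot ℕ) := by exact_mod_cast hq
      _ < ((N + 1 : ℕ) : WithBot ℕ) := by exact_mod_cast Nat.lt_succ_self N
  have hrep := Lagrange.eq_interpolate (stmt12Node_injOn N) hdeg
  rw [Lagrange.interpolate_apply] at hrep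
  have : (derivative^[j] q).eval t
      = ∑ s ∈ Finset.range (N + 1), q.eval (stmt12Node N s) *
          (derivative^[j] (Lagrange.basis (Finset.range (N + 1)) (stmt12Node N) s)).eval t := by
    conv_lhs => rw [hrep]
    rw [Polynomial.iterate_derivative_sum]
    rw [Polynomial.eval_finset_sum]
    refine Finset.sum_congr rfl fun s hs => ?_
    rw [Polynomial.iterate_derivative_C_mul, Polynomial.eval_mul, Polynomial.eval_C]
  rw [this]
  calc |∑ s ∈ Finset.range (N + 1), q.eval (stmt12Node N s) *
          (derivative^[j] (Lagrange.basis (Finset.range (N + 1)) (stmt12Node N) s)).eval t|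
      ≤ ∑ s ∈ Finset.range (N + 1), |q.eval (stmt12Node N s) *
          (derivative^[j] (Lagrange.basis (Finset.range (N + 1)) (stmt12Node N) s)).eval t| :=
        Finset.abs_sum_le_sum_abs _ _
    _ ≤ ∑ s ∈ Finset.range (N + 1), Cb s * M := by
        refine Finset.sum_le_sum fun s hs => ?_
        rw [abs_mul]
        calc |q.eval (stmt12Node N s)| *
            |(derivative^[j] (Lagrange.basis (Finset.range (N + 1)) (stmt12Node N) s)).eval t|
            ≤ M * Cb s :=
              mul_le_mul (hM s hs) (hCb s t ht) (abs_nonneg _) hM0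
          _ = Cb s * M := mul_comm _ _
    _ = (∑ s ∈ Finset.range (N + 1), Cb s) * M := by rw [Finset.sum_mul]

lemma stmt12_iteratedDeriv_pi_apply {d : ℕ} (f : ℝ → Fin d → ℝ) (hf : ContDiff ℝ (⊤ : ℕ∞) f)
    (j : ℕ) (t : ℝ) (i : Fin d) :
    iteratedDeriv j f t i = iteratedDeriv j (fun s => f s i) t := by
  have h := (ContinuousLinearMap.proj (R := ℝ) (φ := fun _ : Fin d => ℝ) i).iteratedFDeriv_comp_left
    (hf.contDiffAt (x := t)) (i := j) (by exact_mod_cast le_top)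
  have hfun : (fun s => f s i) = (ContinuousLinearMap.proj (R := ℝ) (φ := fun _ : Fin d => ℝ) i) ∘ f := rfl
  rw [iteratedDeriv_eq_iteratedFDeriv, hfun, iteratedDeriv_eq_iteratedFDeriv, h]
  rfl

/-- if `c_n : ℝ → ℝ^d` are polynomial curves of uniformly bounded degree and
`n ↦ sup_{[-1,1]} |c_n|` converges fast to `0`, then `c_n` converges fast to `0` in
`C^∞(ℝ, ℝ^d)`: for all `k, j` and every compact `K`, `n^k sup_K |c_n^{(j)}|` is bounded. -/
theorem stmt12 (d N : ℕ) (c : ℕ → ℝ → (Fin d → ℝ))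
    (p : ℕ → Fin d → Polynomial ℝ)
    (hdeg : ∀ n i, (p n i).natDegree ≤ N)
    (hcp : ∀ n i (t : ℝ), c n t i = (p n i).eval t)
    (hfast : ∀ k : ℕ, Tendsto
      (fun n : ℕ => (n : ℝ) ^ k * ⨆ t : Set.Icc (-1 : ℝ) 1, ‖c n t.1‖)
      atTop (nhds 0)) :
    ∀ k j : ℕ, ∀ K : Set ℝ, IsCompact K →
      ∃ C : ℝ, ∀ n : ℕ, ∀ t ∈ K, (n : ℝ) ^ k * ‖iteratedDeriv j (c n) t‖ ≤ C := by
  intro k j K hK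
  set S : ℕ → ℝ := fun n => ⨆ t : Set.Icc (-1 : ℝ) 1, ‖c n t.1‖ with hS
  have hceq : ∀ n, c n = fun t i => (p n i).eval t := by
    intro n; funext t i; exact hcp n i t
  have hcont : ∀ n, Continuous (c n) := by
    intro n; rw [hceq n]; exact continuous_pi fun i => Polynomial.continuous _
  have hsmooth : ∀ n, ContDiff ℝ (⊤ : ℕ∞) (c n) := by
    intro n; rw [hceq n]; exact contDiff_pi.mpr fun i => stmt12_contDiff_eval _
  have hbdd : ∀ n, BddAbove (Set.range fun t : Set.Icc (-1 : ℝ) 1 => ‖c n t.1‖) := by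
    intro n
    have : Set.range (fun t : Set.Icc (-1 : ℝ) 1 => ‖c n t.1‖)
        = (fun t => ‖c n t‖) '' Set.Icc (-1 : ℝ) 1 := by
      ext x; simp [Set.mem_image]
    rw [this]
    exact (isCompact_Icc.image (continuous_norm.comp (hcont n))).bddAbove
  have hS0 : ∀ n, 0 ≤ S n := fun n => Real.iSup_nonneg fun t => norm_nonneg _
  have hle : ∀ n, ∀ u ∈ Set.Icc (-1 : ℝ) 1, ‖c n u‖ ≤ S n := by
    intro n u hu
    exact le_ciSup (hbdd n) (⟨u, hu⟩ : Set.Icc (-1 : ℝ) 1)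
  obtain ⟨B, hB0, hkey⟩ := stmt12_key N j K hK
  -- the fast convergence gives boundedness
  obtain ⟨C0, hC0⟩ := (hfast k).bddAbove_range
  refine ⟨B * C0, fun n t ht => ?_⟩
  have hnk : (0 : ℝ) ≤ (n : ℝ) ^ k := by positivity
  have hnkS : (n : ℝ) ^ k * S n ≤ C0 := hC0 (Set.mem_range_self n)
  -- bound the iterated derivative by B * S n
  have hmain : ‖iteratedDeriv j (c n) t‖ ≤ B * S n := by
    have hBSnn : 0 ≤ B * S n := mul_nonneg hB0 (hS0 n)
    rw [pi_norm_le_iff_of_nonneg hBSnn]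
    intro i
    have hcomp : iteratedDeriv j (c n) t i = iteratedDeriv j (fun s => c n s i) t :=
      stmt12_iteratedDeriv_pi_apply (c n) (hsmooth n) j t i
    have hcompoly : (fun s => c n s i) = fun s => (p n i).eval s := by
      funext s; exact hcp n i s
    rw [Real.norm_eq_abs, hcomp, hcompoly, stmt12_iteratedDeriv_eval]
    refine hkey (p n i) (hdeg n i) (S n) (fun s hs => ?_) t ht
    have hmem := stmt12Node_mem N hs
    calc |(p n i).eval (stmt12Node N s)| = |c n (stmt12Node N s) i| := by rw [hcp]
      _ = ‖(c n (stmt12Node N s)) i‖ := rfl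
      _ ≤ ‖c n (stmt12Node N s)‖ := norm_le_pi_norm _ i
      _ ≤ S n := hle n _ hmem
  calc (n : ℝ) ^ k * ‖iteratedDeriv j (c n) t‖ ≤ (n : ℝ) ^ k * (B * S n) :=
        mul_le_mul_of_nonneg_left hmain hnk
    _ = B * ((n : ℝ) ^ k * S n) := by ring
    _ ≤ B * C0 := mul_le_mul_of_nonneg_left hnkS hB0
end

section
/- Let q ≥ 1 be an integer and for y ∈ ℝ^d, r > 0 let S_q(y,r) = y + (S_q ∩ {x_d ≤ r}) denote the translated truncated simplicial cusp, where S_q = {x ∈ ℝ^d : 0 ≤ x_1 ≤ ⋯ ≤ x_{d-1} ≤ x_d^q}. There exists a universal constant c > 0 such that for all sufficiently small r_1, r_2 > 0 and all y_1, y_2 ∈ ℝ^d: if |y_1 − y_2| < c · min{r_1^q, r_2^q}, then S_q(y_1,r_1) ∩ S_q(y_2,r_2) ≠ ∅. -/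
/-- The simplicial cusp `S_q = {x ∈ ℝ^{m+1} : 0 ≤ x_1 ≤ ⋯ ≤ x_m ≤ x_{m+1}^q, x_{m+1} ≥ 0}`. -/
def SqE (q m : ℕ) : Set (EuclideanSpace ℝ (Fin (m + 1))) :=
  {x | 0 ≤ x (Fin.last m) ∧ (∀ i : Fin m, 0 ≤ x i.castSucc) ∧
    (∀ i j : Fin m, i ≤ j → x i.castSucc ≤ x j.castSucc) ∧
    ∀ i : Fin m, x i.castSucc ≤ x (Fin.last m) ^ q}

/-!
Put `s = min r₁ r₂` and `g = (s/4)^q / (m+1)`. The point `p` with height `x_{m+1} = s/2` and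
coordinates `x_i = i g` lies in the truncated cusp together with its whole sup-ball of radius
`g/2`: consecutive coordinates are `g` apart, the largest one is below `(s/4)^q`, and the
height stays in `[s/4, s]`. Since `g/2` is a fixed multiple `c s^q`, the hypothesis
`‖y₁ - y₂‖ < c s^q` puts `p + (y₂ - y₁)` in that ball, and `y₂ + p = y₁ + (p + (y₂ - y₁))`
is a common point of the two translated cusps.
-/

def cuspPoint (m : ℕ) (t g : ℝ) : EuclideanSpace ℝ (Fin (m + 1)) :=
  WithLp.toLp 2 fun i => if i = Fin.last m then t else ((i : ℕ) + 1) * g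

@[simp]
lemma cuspPoint_last (m : ℕ) (t g : ℝ) : cuspPoint m t g (Fin.last m) = t := by
  simp [cuspPoint]

@[simp]
lemma cuspPoint_castSucc (m : ℕ) (t g : ℝ) (i : Fin m) :
    cuspPoint m t g i.castSucc = ((i : ℕ) + 1) * g := by
  simp [cuspPoint, (Fin.castSucc_lt_last i).ne]

lemma cuspPoint_add_mem_SqE {q m : ℕ} {t g : ℝ} (hg : 0 < g) (hgt : g ≤ t)
    (hcap : (m + 1) * g ≤ (t / 2) ^ q) {v : EuclideanSpace ℝ (Fin (m + 1))}
    (hv : ∀ i, |v i| ≤ g / 2) : cuspPoint m t g + v ∈ SqE q m := by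
  have hv' := fun i => abs_le.1 (hv i)
  have hlast : t / 2 ≤ t + v (Fin.last m) := by linarith [hv' (Fin.last m)]
  simp only [SqE, Set.mem_ofPred_eq, PiLp.add_apply, cuspPoint_last, cuspPoint_castSucc]
  refine ⟨by linarith, fun i => ?_, fun i j hij => ?_, fun i => ?_⟩
  · nlinarith [hv' i.castSucc]
  · rcases hij.eq_or_lt with rfl | hlt
    · rfl
    · have hij' : ((i : ℕ) : ℝ) + 1 ≤ (j : ℕ) := by exact_mod_cast hlt
      nlinarith [hv' i.castSucc, hv' j.castSucc]
  · have him : ((i : ℕ) : ℝ) + 1 ≤ m := by exact_mod_cast i.isLt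
    calc ((i : ℕ) + 1) * g + v i.castSucc ≤ (m + 1) * g := by nlinarith [hv' i.castSucc]
      _ ≤ (t / 2) ^ q := hcap
      _ ≤ (t + v (Fin.last m)) ^ q := by gcongr; linarith

lemma cuspPoint_add_mem_truncated {q m : ℕ} {t g r : ℝ} (hg : 0 < g) (hgt : g ≤ t)
    (hcap : (m + 1) * g ≤ (t / 2) ^ q) (htr : t + g / 2 ≤ r)
    {v : EuclideanSpace ℝ (Fin (m + 1))} (hv : ∀ i, |v i| ≤ g / 2) :
    cuspPoint m t g + v ∈ SqE q m ∩ {x | x (Fin.last m) ≤ r} := by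
  refine ⟨cuspPoint_add_mem_SqE hg hgt hcap hv, ?_⟩
  simp only [Set.mem_ofPred_eq, PiLp.add_apply, cuspPoint_last]
  linarith [(abs_le.1 (hv (Fin.last m))).2]

/-- there is a universal constant `c > 0` such that for all sufficiently small
`r₁, r₂ > 0` and all `y₁, y₂`, if `|y₁ - y₂| < c · min{r₁^q, r₂^q}` then the translated
truncated simplicial cusps `S_q(y₁,r₁)` and `S_q(y₂,r₂)` intersect. -/
theorem stmt13 (q m : ℕ) (hq : 1 ≤ q) :
    ∃ c > (0 : ℝ), ∃ δ > (0 : ℝ), ∀ r₁ r₂ : ℝ, 0 < r₁ → r₁ ≤ δ → 0 < r₂ → r₂ ≤ δ →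
      ∀ y₁ y₂ : EuclideanSpace ℝ (Fin (m + 1)),
        ‖y₁ - y₂‖ < c * min (r₁ ^ q) (r₂ ^ q) →
        ((fun x => y₁ + x) '' (SqE q m ∩ {x | x (Fin.last m) ≤ r₁}) ∩
          (fun x => y₂ + x) '' (SqE q m ∩ {x | x (Fin.last m) ≤ r₂})).Nonempty := by
  refine ⟨1 / (2 * 4 ^ q * (m + 1)), by positivity, 1, one_pos, ?_⟩
  intro r₁ r₂ hr₁ hr₁1 hr₂ _ y₁ y₂ hy
  set s := min r₁ r₂
  set g := (s / 4) ^ q / (m + 1)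
  have hg : 0 < g := by positivity
  have hcap : (m + 1) * g = (s / 2 / 2) ^ q := by
    rw [div_div, mul_div_cancel₀ _ (by positivity)]; norm_num
  have hgs : g ≤ s / 4 := calc
    g ≤ (s / 4) ^ q := div_le_self (by positivity) (by linarith [m.cast_nonneg (α := ℝ)])
    _ ≤ s / 4 := pow_le_of_le_one (by positivity)
        (by linarith [min_le_left r₁ r₂]) (by omega)
  have hmin : min (r₁ ^ q) (r₂ ^ q) ≤ s ^ q := by
    rcases min_choice r₁ r₂ with h | h <;> rw [show s = _ from h]
    exacts [min_le_left _ _, min_le_right _ _]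
  have hnorm : ‖y₂ - y₁‖ ≤ g / 2 := calc
    ‖y₂ - y₁‖ ≤ 1 / (2 * 4 ^ q * (m + 1)) * s ^ q := by
      rw [norm_sub_rev]; exact hy.le.trans (by gcongr)
    _ = g / 2 := by simp only [g, div_pow]; field_simp
  have hv : ∀ i, |(y₂ - y₁) i| ≤ g / 2 := fun i =>
    (Real.norm_eq_abs _ ▸ PiLp.norm_apply_le (y₂ - y₁) i).trans hnorm
  have hv₀ : ∀ i, |(0 : EuclideanSpace ℝ (Fin (m + 1))) i| ≤ g / 2 := fun _ => by
    simp only [PiLp.zero_apply, abs_zero]; positivity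
  have mem {r : ℝ} (hr : s ≤ r) {v : EuclideanSpace ℝ (Fin (m + 1))} (hv : ∀ i, |v i| ≤ g / 2) :=
    cuspPoint_add_mem_truncated (q := q) (r := r) hg (by linarith) hcap.le (by linarith) hv
  refine ⟨y₂ + cuspPoint m (s / 2) g,
    ⟨_, mem (min_le_left r₁ r₂) hv, by abel_nf⟩, ⟨_, mem (min_le_right r₁ r₂) hv₀, by simp⟩⟩
end

section
/- Let X ⊆ ℝ^d be a set and suppose X = ⋃_{j∈J} X_j is a locally finite union of closed sets, K ⊆ X compact, and suppose: any two points x, y ∈ K can be joined by a rectifiable path c in K with length ℓ(c) ≤ C|x − y|^{1/m}; there are only finitely many j with K ∩ X_j ≠ ∅; a function g : K → E into a normed space E satisfies ‖g(a) − g(b)‖ ≤ H|a − b|^γ for a, b in the same set K ∩ X_j; and along any path in K one can pass between consecutive sets X_j through common points with at most k transitions. Then ‖g(x) − g(y)‖ ≤ C^γ H k |x − y|^{γ/m} for all x, y ∈ K. -/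
open Set

lemma tel_aux {E : Type} [NormedAddCommGroup E] :
    ∀ n : ℕ, ∀ f : Fin (n + 1) → E,
      ‖f 0 - f (Fin.last n)‖ ≤ ∑ i : Fin n, ‖f i.castSucc - f i.succ‖ := by
  intro n
  induction n with
  | zero => intro f; simp [Fin.last]
  | succ n ih =>
    intro f
    rw [Fin.sum_univ_castSucc]
    have h1 := ih (f ∘ Fin.castSucc)
    simp only [Function.comp_apply, Fin.succ_castSucc] at h1
    calc ‖f 0 - f (Fin.last (n + 1))‖
        ≤ ‖f 0 - f (Fin.last n).castSucc‖ + ‖f (Fin.last n).castSucc - f (Fin.last (n + 1))‖ :=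
          norm_sub_le_norm_sub_add_norm_sub _ _ _
      _ ≤ _ := by
          gcongr
          · simpa using h1
          · rw [← Fin.succ_last]

/-- let `X = ⋃ⱼ Xⱼ` be a locally finite union of closed sets, `K ⊆ X` compact,
meeting only finitely many `Xⱼ`, and `g : K → E` be `γ`-Hölder with constant `H` on each
`K ∩ Xⱼ`. If any two points of `K` can be joined by a chain of at most `k` segments inside `K`
with consecutive points in a common `Xⱼ` and total length `≤ C|x - y|^{1/m}`, then

`‖g(x) - g(y)‖ ≤ C^γ H k |x - y|^{γ/m}` on `K`. -/
theorem stmt16 (d : ℕ) (E : Type) [NormedAddCommGroup E]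
    (J : Type) (Xf : J → Set (EuclideanSpace ℝ (Fin d)))
    (hcl : ∀ j, IsClosed (Xf j)) (hlf : LocallyFinite Xf)
    (K : Set (EuclideanSpace ℝ (Fin d))) (hKcpt : IsCompact K) (hKX : K ⊆ ⋃ j, Xf j)
    (hfin : {j | (K ∩ Xf j).Nonempty}.Finite)
    (g : EuclideanSpace ℝ (Fin d) → E)
    (C H γ m : ℝ) (hC : 0 < C) (hH : 0 ≤ H) (hγ0 : 0 < γ) (hγ1 : γ ≤ 1) (hm : 1 ≤ m)
    (k : ℕ) (hk : 1 ≤ k)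
    (hHold : ∀ j : J, ∀ a ∈ K ∩ Xf j, ∀ b ∈ K ∩ Xf j, ‖g a - g b‖ ≤ H * ‖a - b‖ ^ γ)
    (hchain : ∀ x ∈ K, ∀ y ∈ K, ∃ pp : Fin (k + 1) → EuclideanSpace ℝ (Fin d),
      pp 0 = x ∧ pp (Fin.last k) = y ∧ (∀ i, pp i ∈ K) ∧
      (∀ i : Fin k, ∃ j : J, pp i.castSucc ∈ Xf j ∧ pp i.succ ∈ Xf j) ∧
      ∑ i : Fin k, ‖pp i.castSucc - pp i.succ‖ ≤ C * ‖x - y‖ ^ (1 / m)) :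
    ∀ x ∈ K, ∀ y ∈ K, ‖g x - g y‖ ≤ C ^ γ * H * k * ‖x - y‖ ^ (γ / m) := by

  intro x hx y hy
  obtain ⟨pp, h0, hlast, hKmem, hjoint, hsum⟩ := hchain x hx y hy
  set B := C * ‖x - y‖ ^ (1 / m) with hB
  have hB0 : 0 ≤ B := by positivity
  have hstep : ∀ i : Fin k, ‖g (pp i.castSucc) - g (pp i.succ)‖ ≤ H * B ^ γ := by
    intro i
    obtain ⟨j, hj1, hj2⟩ := hjoint i
    have hle : ‖pp i.castSucc - pp i.succ‖ ≤ B :=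
      le_trans (Finset.single_le_sum (f := fun i : Fin k => ‖pp i.castSucc - pp i.succ‖) (fun i _ => norm_nonneg _) (Finset.mem_univ i)) hsum
    calc ‖g (pp i.castSucc) - g (pp i.succ)‖
        ≤ H * ‖pp i.castSucc - pp i.succ‖ ^ γ :=
          hHold j _ ⟨hKmem _, hj1⟩ _ ⟨hKmem _, hj2⟩
      _ ≤ H * B ^ γ := by
          apply mul_le_mul_of_nonneg_left _ hH
          exact Real.rpow_le_rpow (norm_nonneg _) hle hγ0.le
  have htel : ‖g x - g y‖ ≤ ∑ i : Fin k, ‖g (pp i.castSucc) - g (pp i.succ)‖ := by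
    have := tel_aux k (g ∘ pp)
    simpa [h0, hlast] using this
  have hfin : (∑ i : Fin k, ‖g (pp i.castSucc) - g (pp i.succ)‖) ≤ k * (H * B ^ γ) := by
    calc _ ≤ ∑ _i : Fin k, H * B ^ γ := Finset.sum_le_sum fun i _ => hstep i
      _ = k * (H * B ^ γ) := by simp
  have hBγ : B ^ γ = C ^ γ * ‖x - y‖ ^ (γ / m) := by
    rw [hB, Real.mul_rpow hC.le (Real.rpow_nonneg (norm_nonneg _) _),
      ← Real.rpow_mul (norm_nonneg _), one_div_mul_eq_div]
  calc ‖g x - g y‖ ≤ k * (H * B ^ γ) := le_trans htel hfin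
    _ = C ^ γ * H * k * ‖x - y‖ ^ (γ / m) := by rw [hBγ]; ring
end
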